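/- Saddle point of the AUC-square min-max objective: with a* = a(S), b* = b(S) and α* = 1 + b(S) − a(S), the triple (a*, b*, α*) is a saddle point of g(a,b,α) := E_μ[F(a,b,α)]; that is, for all a, b, α ∈ ℝ, g(a*, b*, α) ≤ g(a*, b*, α*) ≤ g(a, b, α*), and g(a*, b*, α*) = p(1−p)·A_S. -/

import Mathlib

/-! With `p = μ(A)`, the objective is
`g(a,b,α) = p(1-p) (E₊(S-a)² + E₋(S-b)² - α² + 2α(1 + b(S) - a(S)))`.
By the bias–variance decomposition `E₊(S-a)² = Var₊ S + (a(S) - a)²`, `g` is a convex function of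
`(a, b)` minimized at `(a(S), b(S))` plus a concave function of `α` maximized at `α*`.
The same decomposition, applied to both variables of the double integral, gives
`A_S = Var₊ S + Var₋ S + α*²`, which is `g(a*, b*, α*) / (p(1-p))`. -/

open MeasureTheory ProbabilityTheory

/-- The AUC-square integrand
`F(a,b,α) = (1−p)(S−a)²·1_A + p(S−b)²·1_{Aᶜ} − p(1−p)α² + 2α(p(1−p) + p·S·1_{Aᶜ} − (1−p)·S·1_A)`. -/
noncomputable def FSq {Ω : Type*} (A : Set Ω) (p : ℝ) (S : Ω → ℝ)
    (a b α : ℝ) (ω : Ω) : ℝ :=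
  (1 - p) * (S ω - a) ^ 2 * A.indicator 1 ω
    + p * (S ω - b) ^ 2 * Aᶜ.indicator 1 ω
    - p * (1 - p) * α ^ 2
    + 2 * α * (p * (1 - p) + p * S ω * Aᶜ.indicator 1 ω
        - (1 - p) * S ω * A.indicator 1 ω)

theorem FSq_eq_indicator_add {Ω : Type*} (A : Set Ω) (p : ℝ) (S : Ω → ℝ) (a b α : ℝ) (ω : Ω) :
    FSq A p S a b α ω =
      A.indicator (fun ω ↦ (1 - p) * ((S ω - a) ^ 2 + -2 * α * S ω)) ω
        + Aᶜ.indicator (fun ω ↦ p * ((S ω - b) ^ 2 + 2 * α * S ω)) ω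
        + p * (1 - p) * (2 * α - α ^ 2) := by
  by_cases h : ω ∈ A <;>
    simp only [FSq, h, Set.mem_compl_iff, not_true_eq_false, not_false_eq_true,
      Set.indicator_of_mem, Set.indicator_of_notMem, Pi.one_apply] <;>
    ring

section

variable {Ω Ω' E : Type*} [MeasurableSpace Ω] [MeasurableSpace Ω'] {μ : Measure Ω} {s : Set Ω}
  [NormedAddCommGroup E]

theorem MeasureTheory.MemLp.cond {p : ENNReal} {f : Ω → E} (hf : MemLp f p μ) :
    MemLp f p μ[|s] := by
  rcases eq_or_ne (μ s) 0 with hs | hs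
  · simp [cond_eq_zero_of_meas_eq_zero hs]
  · exact (hf.restrict s).smul_measure (ENNReal.inv_ne_top.mpr hs)

theorem setIntegral_eq_measureReal_smul_integral_cond [NormedSpace ℝ E] [IsFiniteMeasure μ]
    (f : Ω → E) : ∫ ω in s, f ω ∂μ = μ.real s • ∫ ω, f ω ∂μ[|s] := by
  rw [ProbabilityTheory.cond, integral_smul_measure, smul_smul, ENNReal.toReal_inv,
    ← measureReal_def]
  rcases eq_or_ne (μ s) 0 with hs | hs
  · simp [Measure.restrict_eq_zero.mpr hs]
  · rw [mul_inv_cancel₀ ((measureReal_ne_zero_iff).mpr hs), one_smul]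

theorem integral_sub_sq_eq_variance_add [IsProbabilityMeasure μ] {X : Ω → ℝ} (hX : MemLp X 2 μ)
    (a : ℝ) : ∫ ω, (X ω - a) ^ 2 ∂μ = Var[X; μ] + (μ[X] - a) ^ 2 := by
  have hXa : MemLp (fun ω ↦ X ω - a) 2 μ := hX.sub (memLp_const a)
  rw [← variance_sub_const hX.aestronglyMeasurable a, variance_eq_sub hXa,
    integral_sub (hX.integrable one_le_two) (integrable_const a)]
  simp

theorem integral_integral_sq_sub_add {ν₁ : Measure Ω} {ν₂ : Measure Ω'}
    [IsProbabilityMeasure ν₁] [IsProbabilityMeasure ν₂] {X : Ω → ℝ} {Y : Ω' → ℝ}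
    (hX : MemLp X 2 ν₁) (hY : MemLp Y 2 ν₂) (c : ℝ) :
    ∫ x, ∫ y, (c - X x + Y y) ^ 2 ∂ν₂ ∂ν₁ = Var[X; ν₁] + Var[Y; ν₂] + (c - ν₁[X] + ν₂[Y]) ^ 2 := by
  have inner (x : ℝ) : ∫ y, (x + Y y) ^ 2 ∂ν₂ = Var[Y; ν₂] + (ν₂[Y] + x) ^ 2 := by
    simpa [sub_neg_eq_add, add_comm] using integral_sub_sq_eq_variance_add hY (-x)
  have hsq : Integrable (fun x ↦ (X x - (c + ν₂[Y])) ^ 2) ν₁ :=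
    (hX.sub (memLp_const _)).integrable_sq
  calc ∫ x, ∫ y, (c - X x + Y y) ^ 2 ∂ν₂ ∂ν₁
      = ∫ x, (Var[Y; ν₂] + (X x - (c + ν₂[Y])) ^ 2) ∂ν₁ := by
        congr with x
        rw [inner]
        ring
    _ = Var[X; ν₁] + Var[Y; ν₂] + (c - ν₁[X] + ν₂[Y]) ^ 2 := by
        rw [integral_add (integrable_const _) hsq, integral_const, probReal_univ, one_smul,
          integral_sub_sq_eq_variance_add hX]
        ring

theorem integral_integral_map_sq_sub_add {ν₁ : Measure Ω} {ν₂ : Measure Ω'}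
    [IsProbabilityMeasure ν₁] [IsProbabilityMeasure ν₂] {X : Ω → ℝ} {Y : Ω' → ℝ}
    (hX : MemLp X 2 ν₁) (hY : MemLp Y 2 ν₂) (c : ℝ) :
    ∫ s, ∫ t, (c - s + t) ^ 2 ∂(ν₂.map Y) ∂(ν₁.map X)
      = Var[X; ν₁] + Var[Y; ν₂] + (c - ν₁[X] + ν₂[Y]) ^ 2 := by
  have hXm := hX.aemeasurable
  have hYm := hY.aemeasurable
  have := Measure.isProbabilityMeasure_map (μ := ν₁) hXm
  have := Measure.isProbabilityMeasure_map (μ := ν₂) hYm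
  have key := integral_integral_sq_sub_add (X := id) (Y := id)
    ((memLp_map_measure_iff aestronglyMeasurable_id hXm).mpr hX)
    ((memLp_map_measure_iff aestronglyMeasurable_id hYm).mpr hY) c
  rwa [variance_map aemeasurable_id hXm, variance_map aemeasurable_id hYm,
    integral_map hXm aestronglyMeasurable_id, integral_map hYm aestronglyMeasurable_id] at key

theorem integral_FSq [IsProbabilityMeasure μ] {A : Set Ω} (hA : MeasurableSet A) {S : Ω → ℝ}
    (hS : MemLp S 2 μ) (a b α : ℝ) :
    ∫ ω, FSq A (μ.real A) S a b α ω ∂μ = μ.real A * (1 - μ.real A) *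
      (∫ ω, (S ω - a) ^ 2 ∂μ[|A] + ∫ ω, (S ω - b) ^ 2 ∂μ[|Aᶜ] - α ^ 2
        + 2 * α * (1 + ∫ ω, S ω ∂μ[|Aᶜ] - ∫ ω, S ω ∂μ[|A])) := by
  have hquad {ν : Measure Ω} [IsFiniteMeasure ν] (hSν : MemLp S 2 ν) (c k : ℝ) :
      Integrable (fun ω ↦ (S ω - c) ^ 2 + k * S ω) ν :=
    (hSν.sub (memLp_const c)).integrable_sq.add ((hSν.integrable one_le_two).const_mul k)
  have hint {ν : Measure Ω} [IsFiniteMeasure ν] (hSν : MemLp S 2 ν) (c k : ℝ) :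
      ∫ ω, ((S ω - c) ^ 2 + k * S ω) ∂ν = ∫ ω, (S ω - c) ^ 2 ∂ν + k * ∫ ω, S ω ∂ν := by
    rw [integral_add (f := fun ω ↦ (S ω - c) ^ 2) (hSν.sub (memLp_const c)).integrable_sq
      ((hSν.integrable one_le_two).const_mul k), integral_const_mul]
  have hIntA := ((hquad hS a (-2 * α)).const_mul (1 - μ.real A)).indicator hA
  have hIntAc := ((hquad hS b (2 * α)).const_mul (μ.real A)).indicator hA.compl
  simp only [FSq_eq_indicator_add]
  rw [integral_add (hIntA.fun_add hIntAc) (integrable_const _),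
    integral_add hIntA hIntAc, integral_indicator hA, integral_indicator hA.compl,
    setIntegral_eq_measureReal_smul_integral_cond, setIntegral_eq_measureReal_smul_integral_cond,
    smul_eq_mul, smul_eq_mul,
    integral_const_mul, integral_const_mul, hint hS.cond, hint hS.cond, integral_const,
    probReal_univ, one_smul, probReal_compl_eq_one_sub hA]
  ring

end

/-- Saddle point of the AUC-square min-max objective: with `a* = a(S)`, `b* = b(S)` and
`α* = 1 + b(S) − a(S)`, the triple `(a*, b*, α*)` is a saddle point of
`g(a,b,α) := E_μ[F(a,b,α)]`, i.e. `g(a*,b*,α) ≤ g(a*,b*,α*) ≤ g(a,b,α*)` for all `a,b,α`,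
and `g(a*,b*,α*) = p(1−p)·A_S`. -/
theorem saddle_point_AUC_square
    {Ω : Type*} [MeasurableSpace Ω] (μ : Measure Ω) [IsProbabilityMeasure μ]
    (A : Set Ω) (hA : MeasurableSet A)
    (p : ℝ) (hp : p = (μ A).toReal) (hp0 : 0 < p) (hp1 : p < 1)
    (S : Ω → ℝ) (hS : MemLp S 2 μ)
    (aS bS αstar AS : ℝ)
    (haS : aS = ∫ ω, S ω ∂μ[|A]) (hbS : bS = ∫ ω, S ω ∂μ[|Aᶜ])
    (hαstar : αstar = 1 + bS - aS)
    (hAS : AS = ∫ s, ∫ t, (1 - s + t) ^ 2 ∂(Measure.map S μ[|Aᶜ]) ∂(Measure.map S μ[|A])) :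
    (∀ a b α : ℝ,
        (∫ ω, FSq A p S aS bS α ω ∂μ) ≤ (∫ ω, FSq A p S aS bS αstar ω ∂μ) ∧
        (∫ ω, FSq A p S aS bS αstar ω ∂μ) ≤ (∫ ω, FSq A p S a b αstar ω ∂μ)) ∧
    (∫ ω, FSq A p S aS bS αstar ω ∂μ) = p * (1 - p) * AS := by
  rw [← measureReal_def] at hp
  have : IsProbabilityMeasure μ[|A] :=
    cond_isProbabilityMeasure <| (measureReal_ne_zero_iff).mp (hp ▸ hp0.ne')
  have : IsProbabilityMeasure μ[|Aᶜ] :=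
    cond_isProbabilityMeasure <| (measureReal_ne_zero_iff).mp <| by
      rw [probReal_compl_eq_one_sub hA, ← hp]
      exact (sub_pos.mpr hp1).ne'
  have hg (a b α : ℝ) : ∫ ω, FSq A p S a b α ω ∂μ = p * (1 - p) * (Var[S; μ[|A]] + Var[S; μ[|Aᶜ]]
      + (aS - a) ^ 2 + (bS - b) ^ 2 + αstar ^ 2 - (α - αstar) ^ 2) := by
    rw [hp, integral_FSq hA hS, integral_sub_sq_eq_variance_add hS.cond,
      integral_sub_sq_eq_variance_add hS.cond, ← hp, ← haS, ← hbS, hαstar]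
    ring
  have hAS_eq : AS = Var[S; μ[|A]] + Var[S; μ[|Aᶜ]] + αstar ^ 2 := by
    rw [hAS, integral_integral_map_sq_sub_add hS.cond hS.cond, ← haS, ← hbS, hαstar]
    ring
  have hpq : 0 ≤ p * (1 - p) := mul_nonneg hp0.le (sub_nonneg.mpr hp1.le)
  refine ⟨fun a b α ↦ ⟨?_, ?_⟩, ?_⟩
  · rw [hg, hg, sub_self]
    nlinarith [mul_nonneg hpq (sq_nonneg (α - αstar))]
  · rw [hg, hg, sub_self, sub_self]
    nlinarith [mul_nonneg hpq (sq_nonneg (aS - a)), mul_nonneg hpq (sq_nonneg (bS - b))]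
  · rw [hg, hAS_eq, sub_self]
    ring
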